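/- arXiv:2007.09768 — 7 statements merged into one kernel-verified Lean document; each statement's English description precedes it below -/
import Mathlib

section
/- Let c ≥ 1, ℓ ≥ 0, k ≥ 1, and let G be a finite simple graph on n vertices whose complement is c-closed. Then the number of sets S ⊆ V(G) such that the induced subgraph G[S] admits a good (ℓ,k)-partition is at most n^{ℓ+2k} · 2^{k(c−1)}. -/
/-!
A set `S` with a good `(ℓ, k)`-partition is recovered from the edges `eᵢ = aᵢbᵢ`, the set `A₀` and
the parts `A₁, …, A_k`, since these cover `S`. Each `Aᵢ` consists of common neighbours of `aᵢ` and
`bᵢ` in the complement, where `aᵢ` and `bᵢ` are non-adjacent; so `c`-closedness of the complement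
leaves at most `2 ^ (c - 1)` choices for `Aᵢ` once the edge is fixed. Listing `A₀`
(padded with `a₁`) as an `ℓ`-tuple and the edges as two `k`-tuples gives the bound.
-/

/-- A graph is `c`-closed if every two distinct non-adjacent vertices have at
most `c - 1` common neighbors. -/
def CClosed {V : Type*} (G : SimpleGraph V) (c : ℕ) : Prop :=
  ∀ u v : V, u ≠ v → ¬ G.Adj u v →
    (G.neighborSet u ∩ G.neighborSet v).ncard ≤ c - 1

/-- `H` admits a good `(ℓ, k)`-partition: there are `k` edges
`eᵢ = (a i, b i)` and a partition `A 0, A 1, …, A k` of the vertices not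
incident to any of these edges such that `|A 0| ≤ ℓ` and, for `i ≥ 1`, no
vertex of `A i` is adjacent to an endpoint of `eᵢ`. -/
def HasGoodPartition {V : Type*} (H : SimpleGraph V) (ℓ k : ℕ) : Prop :=
  ∃ (a b : Fin k → V) (A : Fin (k + 1) → Set V),
    (∀ i, H.Adj (a i) (b i)) ∧
    (∀ i j, i ≠ j → Disjoint (A i) (A j)) ∧
    ((⋃ i, A i) = {v | ∀ i, v ≠ a i ∧ v ≠ b i}) ∧
    (A 0).ncard ≤ ℓ ∧
    (∀ i : Fin k, ∀ v ∈ A i.succ, ¬ H.Adj v (a i) ∧ ¬ H.Adj v (b i))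

open Set

theorem Set.exists_fin_cover_of_ncard_le {α : Type*} [Finite α] {T : Set α} {m : ℕ} (hT : T.ncard ≤ m)
    (d : α) : ∃ e : Fin m → α, T ⊆ range e ∧ range e ⊆ insert d T := by
  classical
  have : Fintype α := Fintype.ofFinite α
  obtain ⟨ι⟩ : Nonempty (T ↪ Fin m) := Function.Embedding.nonempty_of_card_le <| by
    rwa [Fintype.card_fin, ← Nat.card_eq_fintype_card, Nat.card_coe_set_eq]
  refine ⟨Function.extend ι Subtype.val fun _ ↦ d, fun t ht ↦ ⟨ι ⟨t, ht⟩, ?_⟩, ?_⟩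
  · exact ι.injective.extend_apply _ _ _
  · rintro _ ⟨j, rfl⟩
    by_cases hj : ∃ t, ι t = j
    · obtain ⟨t, rfl⟩ := hj
      exact .inr (by simp [ι.injective.extend_apply])
    · exact .inl (Function.extend_apply' _ _ _ hj)

theorem Set.union_eq_union_of_subset_of_subset_insert {α : Type*} {s t u : Set α} {x : α}
    (hx : x ∈ s) (htu : t ⊆ u) (hut : u ⊆ insert x t) : s ∪ u = s ∪ t :=
  (union_subset subset_union_left (hut.trans (insert_subset (.inl hx) subset_union_right))).antisymm
    (union_subset_union_right s htu)

theorem Set.ncard_le_card_of_subset_range {α β : Type*} [Finite α] {f : α → β} {s : Set β}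
    (h : s ⊆ range f) : s.ncard ≤ Nat.card α :=
  (ncard_le_ncard h (finite_range f)).trans
    ((Nat.card_coe_set_eq _).symm.trans_le (Finite.card_range_le f))

theorem CClosed.exists_fin_cover_commonNeighbors {V : Type*} [Finite V] {G : SimpleGraph V}
    {c : ℕ} (hG : CClosed G c) (u v : V) :
    ∃ e : Fin (c - 1) → V, u ≠ v → ¬G.Adj u v → G.neighborSet u ∩ G.neighborSet v ⊆ range e := by
  by_cases huv : u ≠ v ∧ ¬G.Adj u v
  · obtain ⟨e, he, -⟩ := exists_fin_cover_of_ncard_le (hG u v huv.1 huv.2) u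
    exact ⟨e, fun _ _ ↦ he⟩
  · exact ⟨fun _ ↦ u, fun h h' ↦ absurd ⟨h, h'⟩ huv⟩

namespace HasGoodPartition

variable {ℓ k : ℕ}

theorem exists_union_eq_univ {W : Type*} {H : SimpleGraph W} (h : HasGoodPartition H ℓ k) :
    ∃ (a b : Fin k → W) (A₀ : Set W) (A : Fin k → Set W),
      (∀ i, H.Adj (a i) (b i)) ∧ A₀.ncard ≤ ℓ ∧
      (∀ i, A i ⊆ Hᶜ.neighborSet (a i) ∩ Hᶜ.neighborSet (b i)) ∧
      range a ∪ range b ∪ A₀ ∪ ⋃ i, A i = univ := by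
  obtain ⟨a, b, A, hab, -, hunion, hA₀, hA⟩ := h
  have hendpoints : ∀ i, ∀ v ∈ A i.succ, v ≠ a i ∧ v ≠ b i := fun i v hv ↦
    (hunion ▸ mem_iUnion_of_mem i.succ hv : v ∈ {v | ∀ i, v ≠ a i ∧ v ≠ b i}) i
  refine ⟨a, b, A 0, fun i ↦ A i.succ, hab, hA₀, fun i v hv ↦ ?_, ?_⟩
  · simp only [mem_inter_iff, SimpleGraph.mem_neighborSet, SimpleGraph.compl_adj]
    exact ⟨⟨(hendpoints i v hv).1.symm, fun h ↦ (hA i v hv).1 h.symm⟩,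
      (hendpoints i v hv).2.symm, fun h ↦ (hA i v hv).2 h.symm⟩
  · refine eq_univ_of_forall fun v ↦ ?_
    by_cases hv : ∀ i, v ≠ a i ∧ v ≠ b i
    · obtain ⟨j, hj⟩ := mem_iUnion.1 (hunion ▸ hv : v ∈ ⋃ j, A j)
      cases j using Fin.cases with
      | zero => exact .inl (.inr hj)
      | succ i => exact .inr (mem_iUnion_of_mem i hj)
    · simp only [not_forall, not_and_or, not_not] at hv
      obtain ⟨i, rfl | rfl⟩ := hv
      · exact .inl (.inl (.inl (mem_range_self i)))
      · exact .inl (.inl (.inr (mem_range_self i)))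

theorem exists_union_eq_of_induce {V : Type*} {G : SimpleGraph V} {S : Set V}
    (h : HasGoodPartition (G.induce S) ℓ k) :
    ∃ (a b : Fin k → V) (A₀ : Set V) (A : Fin k → Set V),
      (∀ i, G.Adj (a i) (b i)) ∧ A₀.ncard ≤ ℓ ∧
      (∀ i, A i ⊆ Gᶜ.neighborSet (a i) ∩ Gᶜ.neighborSet (b i)) ∧
      range a ∪ range b ∪ A₀ ∪ ⋃ i, A i = S := by
  obtain ⟨a, b, A₀, A, hab, hA₀, hA, hcover⟩ := h.exists_union_eq_univ
  have hcompl {x y : S} : (G.induce S)ᶜ.Adj x y → Gᶜ.Adj x y :=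
    (SimpleGraph.Embedding.complEquiv (SimpleGraph.Embedding.induce S)).map_adj_iff.2
  refine ⟨Subtype.val ∘ a, Subtype.val ∘ b, Subtype.val '' A₀, fun i ↦ Subtype.val '' A i, hab,
    (ncard_image_of_injective _ Subtype.val_injective).trans_le hA₀, ?_, ?_⟩
  · rintro i _ ⟨v, hv, rfl⟩
    exact ⟨hcompl (hA i hv).1, hcompl (hA i hv).2⟩
  · simpa [image_union, image_iUnion, range_comp] using congrArg (Subtype.val '' ·) hcover

end HasGoodPartition

theorem stmt_6_general {V : Type*} [Fintype V] (G : SimpleGraph V) (c ℓ k n : ℕ)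
    (hk : 1 ≤ k) (hn : Fintype.card V = n)
    (hclosed : CClosed Gᶜ c) :
    {S : Set V | HasGoodPartition (G.induce S) ℓ k}.ncard
      ≤ n ^ (ℓ + 2 * k) * 2 ^ (k * (c - 1)) := by
  choose e he using hclosed.exists_fin_cover_commonNeighbors
  let decode : (Fin k → V) × (Fin k → V) × (Fin ℓ → V) × (Fin k → Set (Fin (c - 1))) → Set V :=
    fun ⟨a, b, g, C⟩ ↦ range a ∪ range b ∪ range g ∪ ⋃ i, e (a i) (b i) '' C i
  have hsub : {S : Set V | HasGoodPartition (G.induce S) ℓ k} ⊆ range decode := by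
    intro S hS
    obtain ⟨a, b, A₀, A, hab, hA₀, hA, rfl⟩ := HasGoodPartition.exists_union_eq_of_induce hS
    obtain ⟨g, hA₀g, hg⟩ := exists_fin_cover_of_ncard_le hA₀ (a ⟨0, hk⟩)
    have hA_eq i : e (a i) (b i) '' (e (a i) (b i) ⁻¹' A i) = A i :=
      image_preimage_eq_of_subset <| (hA i).trans <| he _ _ (hab i).ne fun h ↦ h.2 (hab i)
    refine ⟨(a, b, g, fun i ↦ e (a i) (b i) ⁻¹' A i), ?_⟩
    simp only [decode, hA_eq]
    rw [union_eq_union_of_subset_of_subset_insert (.inl (mem_range_self _)) hA₀g hg]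
  calc _ ≤ Nat.card ((Fin k → V) × (Fin k → V) × (Fin ℓ → V) × (Fin k → Set (Fin (c - 1)))) :=
        ncard_le_card_of_subset_range hsub
    _ = n ^ (ℓ + 2 * k) * 2 ^ (k * (c - 1)) := by
        simp only [Nat.card_eq_fintype_card, Fintype.card_prod, Fintype.card_fun, Fintype.card_set,
          Fintype.card_fin, hn]
        ring

/-- In the complement `G` of a `c`-closed graph on `n` vertices, the number of
sets `S` whose induced subgraph admits a good `(ℓ, k)`-partition is at most
`n^(ℓ+2k) · 2^(k(c-1))`. -/
theorem stmt_6 {V : Type*} [Fintype V] (G : SimpleGraph V) (c ℓ k n : ℕ)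
    (hc : 1 ≤ c) (hk : 1 ≤ k) (hn : Fintype.card V = n)
    (hclosed : CClosed Gᶜ c) :
    {S : Set V | HasGoodPartition (G.induce S) ℓ k}.ncard
      ≤ n ^ (ℓ + 2 * k) * 2 ^ (k * (c - 1)) :=
  stmt_6_general G c ℓ k n hk hn hclosed
end

section
/- Let t ∈ ℕ and let H be a finite simple graph of treewidth at most t. Then H is a proper (t+1)-star or H admits a good (t,2)-partition. -/
/-!
The bags containing a vertex, or an endpoint of an edge, form subtrees of the decomposition tree.
If the subtrees of all edges pairwise meet, the Helly property of subtrees of a tree gives a bag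
`B z` meeting every edge. It is the head of a proper `(t+1)`-star: the neighbours in `B z` of a
tail `v` all lie in the bag of `v` nearest to `z`, which also contains `v`. Otherwise two edges
have disjoint subtrees; the bag of the first subtree that separates them in the tree contains an
endpoint of the first edge and every vertex adjacent to both edges, so the vertices adjacent to
both edges number at most `t` and form the part `A₀` of a good `(t,2)`-partition.
-/

/-- `H` has treewidth at most `t`: there is a tree decomposition of `H` all of
whose bags have at most `t + 1` vertices. -/
def HasTreewidthLE {V : Type*} (H : SimpleGraph V) (t : ℕ) : Prop :=
  ∃ (ι : Type) (T : SimpleGraph ι) (B : ι → Set V),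
    T.IsTree ∧
    (∀ v : V, ∃ i, v ∈ B i) ∧
    (∀ u v : V, H.Adj u v → ∃ i, u ∈ B i ∧ v ∈ B i) ∧
    (∀ (i j : ι) (p : T.Walk i j), p.IsPath → ∀ x ∈ p.support, B i ∩ B j ⊆ B x) ∧
    (∀ i, (B i).ncard ≤ t + 1)

/-- `H` is a proper `k`-star: its vertices can be split into a head `A` with
`|A| ≤ k` and an independent set of tails, each tail being adjacent to at most
`k - 1` head vertices. -/
def IsProperKStar {V : Type*} (H : SimpleGraph V) (k : ℕ) : Prop :=
  ∃ A : Set V, A.ncard ≤ k ∧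
    (∀ u ∉ A, ∀ v ∉ A, ¬ H.Adj u v) ∧
    (∀ v ∉ A, ({a ∈ A | H.Adj v a}).ncard ≤ k - 1)

open SimpleGraph Walk

theorem SimpleGraph.Walk.IsPath.append {V : Type*} {G : SimpleGraph V} {u v w : V}
    {p : G.Walk u v} {q : G.Walk v w} (hp : p.IsPath) (hq : q.IsPath)
    (h : ∀ x ∈ p.support, x ∈ q.support → x = v) : (p.append q).IsPath := by
  have hq' := hq.support_nodup
  rw [← q.cons_tail_support, List.nodup_cons] at hq'
  rw [isPath_def, support_append]
  refine List.nodup_append.2 ⟨hp.support_nodup, hq'.2, fun x hx y hy hxy => ?_⟩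
  subst hxy
  have hxv : x = v := h x hx (q.cons_tail_support ▸ List.mem_cons_of_mem _ hy)
  exact hq'.1 (hxv ▸ hy)

namespace SimpleGraph.IsTree

variable {ι : Type*} {T : SimpleGraph ι} (hT : T.IsTree)

noncomputable def path (i j : ι) : T.Walk i j := (hT.existsUnique_path i j).choose

theorem path_isPath (i j : ι) : (hT.path i j).IsPath :=
  (hT.existsUnique_path i j).choose_spec.1

theorem eq_path {i j : ι} {p : T.Walk i j} (hp : p.IsPath) : p = hT.path i j :=
  (hT.existsUnique_path i j).choose_spec.2 p hp

theorem mem_support_path_comm {i j x : ι} :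
    x ∈ (hT.path i j).support ↔ x ∈ (hT.path j i).support := by
  rw [← hT.eq_path (hT.path_isPath j i).reverse, support_reverse, List.mem_reverse]

theorem length_path_comm (i j : ι) : (hT.path i j).length = (hT.path j i).length := by
  rw [← hT.eq_path (hT.path_isPath j i).reverse, length_reverse]

theorem path_append_path_of_mem {i j m : ι} (h : m ∈ (hT.path i j).support) :
    (hT.path i m).append (hT.path m j) = hT.path i j := by
  classical
  rw [← hT.eq_path ((hT.path_isPath i j).takeUntil h),
    ← hT.eq_path ((hT.path_isPath i j).dropUntil h), take_spec]

theorem length_path_add_length_path {i j m : ι} (h : m ∈ (hT.path i j).support) :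
    (hT.path i m).length + (hT.path m j).length = (hT.path i j).length := by
  rw [← length_append, hT.path_append_path_of_mem h]

theorem mem_support_path_of_mem_left {i j m x : ι} (h : m ∈ (hT.path i j).support)
    (hx : x ∈ (hT.path i m).support) : x ∈ (hT.path i j).support := by
  rw [← hT.path_append_path_of_mem h, mem_support_append_iff]
  exact .inl hx

theorem mem_support_path_of_mem_right {i j m x : ι} (h : m ∈ (hT.path i j).support)
    (hx : x ∈ (hT.path m j).support) : x ∈ (hT.path i j).support := by
  rw [← hT.path_append_path_of_mem h, mem_support_append_iff]
  exact .inr hx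

theorem mem_support_path_or {i j x : ι} (k : ι) (hx : x ∈ (hT.path i j).support) :
    x ∈ (hT.path i k).support ∨ x ∈ (hT.path k j).support := by
  classical
  rw [← hT.eq_path ((hT.path i k).append (hT.path k j)).bypass_isPath] at hx
  exact (mem_support_append_iff _ _).1 (support_bypass_subset_support _ hx)

theorem mem_support_path_of_forall_eq {i j m : ι}
    (h : ∀ y ∈ (hT.path i m).support, y ∈ (hT.path m j).support → y = m) :
    m ∈ (hT.path i j).support := by
  rw [← hT.eq_path ((hT.path_isPath i m).append (hT.path_isPath m j) h)]
  exact (mem_support_append_iff _ _).2 (.inl (end_mem_support _))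

theorem eq_of_mem_support_path_of_mem_support_path {i j m : ι}
    (hm : m ∈ (hT.path i j).support) (hi : i ∈ (hT.path m j).support) : m = i := by
  have h₁ := hT.length_path_add_length_path hm
  have h₂ := hT.length_path_add_length_path hi
  have h₃ := hT.length_path_comm i m
  exact (eq_of_length_eq_zero (p := hT.path i m) (by omega)).symm

/-- `g` is a point of `S` nearest to `z`. -/
theorem exists_nearest (S : Set ι) (hS : S.Nonempty) (z : ι) :
    ∃ g ∈ S, ∀ j, (∀ y ∈ (hT.path g j).support, y ∈ S) → g ∈ (hT.path z j).support := by
  obtain ⟨g, hg, hmin⟩ : ∃ g ∈ S, ∀ y ∈ S, (hT.path z g).length ≤ (hT.path z y).length :=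
    ⟨_, Function.argminOn_mem _ S hS,
      fun _ hy => Function.argminOn_le (fun g => (hT.path z g).length) S hy⟩
  refine ⟨g, hg, fun j hj => hT.mem_support_path_of_forall_eq fun y hy hyj => ?_⟩
  have hy' := hmin y (hj y hyj)
  have hadd := hT.length_path_add_length_path hy
  exact eq_of_length_eq_zero (p := hT.path y g) (by omega)

theorem exists_median (a b c : ι) :
    ∃ m, m ∈ (hT.path a b).support ∧ m ∈ (hT.path a c).support ∧
      m ∈ (hT.path b c).support := by
  obtain ⟨m, hm, hgate⟩ :=
    hT.exists_nearest {y | y ∈ (hT.path a c).support} ⟨a, start_mem_support _⟩ b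
  refine ⟨m, hT.mem_support_path_comm.1 (hgate a fun y hy => ?_), hm,
    hgate c fun y hy => hT.mem_support_path_of_mem_right hm hy⟩
  exact hT.mem_support_path_of_mem_left hm (hT.mem_support_path_comm.1 hy)

/-- The vertex sets of subtrees of `T`, and `∅`. -/
def PathClosed (S : Set ι) : Prop :=
  ∀ i ∈ S, ∀ j ∈ S, ∀ x ∈ (hT.path i j).support, x ∈ S

variable {hT}

theorem PathClosed.inter {S₁ S₂ : Set ι} (h₁ : hT.PathClosed S₁) (h₂ : hT.PathClosed S₂) :
    hT.PathClosed (S₁ ∩ S₂) :=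
  fun i hi j hj x hx => ⟨h₁ i hi.1 j hj.1 x hx, h₂ i hi.2 j hj.2 x hx⟩

theorem PathClosed.union {S₁ S₂ : Set ι} (h₁ : hT.PathClosed S₁) (h₂ : hT.PathClosed S₂)
    (h : (S₁ ∩ S₂).Nonempty) : hT.PathClosed (S₁ ∪ S₂) := by
  obtain ⟨c, hc₁, hc₂⟩ := h
  intro i hi j hj x hx
  rcases hT.mem_support_path_or c hx with hx | hx
  · exact hi.imp (fun hi => h₁ i hi c hc₁ x hx) (fun hi => h₂ i hi c hc₂ x hx)
  · exact hj.imp (fun hj => h₁ c hc₁ j hj x hx) (fun hj => h₂ c hc₂ j hj x hx)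

theorem PathClosed.exists_gate {S : Set ι} (hS : hT.PathClosed S) (hne : S.Nonempty) (z : ι) :
    ∃ g ∈ S, ∀ j ∈ S, g ∈ (hT.path z j).support := by
  obtain ⟨g, hg, hgate⟩ := hT.exists_nearest S hne z
  exact ⟨g, hg, fun j hj => hgate j (hS g hg j hj)⟩

theorem PathClosed.exists_separator {Q₁ Q₂ : Set ι} (h₁ : hT.PathClosed Q₁)
    (h₂ : hT.PathClosed Q₂) (hne₁ : Q₁.Nonempty) (hne₂ : Q₂.Nonempty) (hdisj : Disjoint Q₁ Q₂) :
    ∃ x ∈ Q₁, ∀ j₁ ∈ Q₁, ∀ j₂ ∈ Q₂, x ∈ (hT.path j₁ j₂).support := by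
  obtain ⟨y, hy⟩ := hne₂
  obtain ⟨x, hx, hgate⟩ := h₁.exists_gate hne₁ y
  refine ⟨x, hx, fun j₁ hj₁ j₂ hj₂ => ?_⟩
  obtain ⟨m, hm₁, hm₂, hm⟩ := hT.exists_median x j₁ j₂
  have hmQ : m ∈ Q₁ := h₁ x hx j₁ hj₁ m hm₁
  -- `m` cannot lie on the path from `y` to `j₂`, which stays inside `Q₂`.
  have hmy : m ∈ (hT.path x y).support := (hT.mem_support_path_or y hm₂).resolve_right
    fun h => Set.disjoint_left.1 hdisj hmQ (h₂ y hy j₂ hj₂ m h)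
  have hxm := hT.eq_of_mem_support_path_of_mem_support_path hmy
    (hT.mem_support_path_comm.1 (hgate m hmQ))
  exact hxm ▸ hm

theorem helly_three {S₁ S₂ S₃ : Set ι} (h₁ : hT.PathClosed S₁) (h₂ : hT.PathClosed S₂)
    (h₃ : hT.PathClosed S₃) (h₁₂ : (S₁ ∩ S₂).Nonempty) (h₁₃ : (S₁ ∩ S₃).Nonempty)
    (h₂₃ : (S₂ ∩ S₃).Nonempty) : (S₁ ∩ S₂ ∩ S₃).Nonempty := by
  obtain ⟨a, ha₂, ha₃⟩ := h₂₃
  obtain ⟨b, hb₁, hb₃⟩ := h₁₃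
  obtain ⟨c, hc₁, hc₂⟩ := h₁₂
  obtain ⟨m, hab, hac, hbc⟩ := hT.exists_median a b c
  exact ⟨m, ⟨h₁ b hb₁ c hc₁ m hbc, h₂ a ha₂ c hc₂ m hac⟩, h₃ a ha₃ b hb₃ m hab⟩

variable (hT)

theorem helly {α : Type*} (F : Finset α) (Q : α → Set ι) (hQ : ∀ a ∈ F, hT.PathClosed (Q a))
    (hF : ∀ a ∈ F, ∀ b ∈ F, (Q a ∩ Q b).Nonempty) : ∃ z, ∀ a ∈ F, z ∈ Q a := by
  rcases F.eq_empty_or_nonempty with rfl | hne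
  · obtain ⟨z⟩ := hT.connected.nonempty
    exact ⟨z, by simp⟩
  induction hne using Finset.Nonempty.cons_induction generalizing Q with
  | singleton a =>
    obtain ⟨z, hz, -⟩ := hF a (Finset.mem_singleton_self a) a (Finset.mem_singleton_self a)
    exact ⟨z, fun b hb => Finset.mem_singleton.1 hb ▸ hz⟩
  | cons a F ha hne ih =>
    have hQa := hQ a (Finset.mem_cons_self a F)
    have hQF : ∀ b ∈ F, hT.PathClosed (Q b) := fun b hb => hQ b (Finset.mem_cons_of_mem hb)
    have hFa : ∀ b ∈ F, (Q a ∩ Q b).Nonempty :=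
      fun b hb => hF a (Finset.mem_cons_self a F) b (Finset.mem_cons_of_mem hb)
    obtain ⟨z, hz⟩ := ih (fun b => Q a ∩ Q b) (fun b hb => hQa.inter (hQF b hb))
      fun b hb c hc => by
        obtain ⟨z, ⟨hza, hzb⟩, hzc⟩ := helly_three hQa (hQF b hb) (hQF c hc) (hFa b hb)
          (hFa c hc) (hF b (Finset.mem_cons_of_mem hb) c (Finset.mem_cons_of_mem hc))
        exact ⟨z, ⟨hza, hzb⟩, hza, hzc⟩
    obtain ⟨b, hb⟩ := hne
    refine ⟨z, fun c hc => ?_⟩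
    rcases Finset.mem_cons.1 hc with rfl | hc
    · exact (hz b hb).1
    · exact (hz c hc).2

end SimpleGraph.IsTree

structure IsTreeDecomposition {V ι : Type*} (H : SimpleGraph V) (T : SimpleGraph ι)
    (B : ι → Set V) : Prop where
  isTree : T.IsTree
  exists_mem_bag : ∀ v, ∃ i, v ∈ B i
  exists_bag_of_adj : ∀ u v, H.Adj u v → ∃ i, u ∈ B i ∧ v ∈ B i
  inter_subset_of_mem_support :
    ∀ (i j : ι) (p : T.Walk i j), p.IsPath → ∀ x ∈ p.support, B i ∩ B j ⊆ B x

namespace IsTreeDecomposition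

variable {V ι : Type*} {H : SimpleGraph V} {T : SimpleGraph ι} {B : ι → Set V}

theorem pathClosed_bags (hD : IsTreeDecomposition H T B) (v : V) :
    hD.isTree.PathClosed {i | v ∈ B i} :=
  fun i hi j hj x hx =>
    hD.inter_subset_of_mem_support i j _ (hD.isTree.path_isPath i j) x hx ⟨hi, hj⟩

theorem pathClosed_bags_of_adj (hD : IsTreeDecomposition H T B) {u v : V} (huv : H.Adj u v) :
    hD.isTree.PathClosed {i | u ∈ B i ∨ v ∈ B i} :=
  (hD.pathClosed_bags u).union (hD.pathClosed_bags v) (hD.exists_bag_of_adj u v huv)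

theorem exists_bag_of_adj_or (hD : IsTreeDecomposition H T B) {u v w : V}
    (h : H.Adj v u ∨ H.Adj v w) : ∃ j, v ∈ B j ∧ (u ∈ B j ∨ w ∈ B j) := by
  rcases h with h | h
  · obtain ⟨j, hv, hu⟩ := hD.exists_bag_of_adj v u h
    exact ⟨j, hv, .inl hu⟩
  · obtain ⟨j, hv, hw⟩ := hD.exists_bag_of_adj v w h
    exact ⟨j, hv, .inr hw⟩

theorem mem_bag_of_separates (hD : IsTreeDecomposition H T B) {u b w d : V} {x : ι}
    (hx : ∀ j₁ ∈ {i | u ∈ B i ∨ b ∈ B i}, ∀ j₂ ∈ {i | w ∈ B i ∨ d ∈ B i},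
      x ∈ (hD.isTree.path j₁ j₂).support)
    {v : V} (h₁ : H.Adj v u ∨ H.Adj v b) (h₂ : H.Adj v w ∨ H.Adj v d) : v ∈ B x := by
  obtain ⟨j₁, hv₁, hj₁⟩ := hD.exists_bag_of_adj_or h₁
  obtain ⟨j₂, hv₂, hj₂⟩ := hD.exists_bag_of_adj_or h₂
  exact hD.inter_subset_of_mem_support j₁ j₂ _ (hD.isTree.path_isPath j₁ j₂) x
    (hx j₁ hj₁ j₂ hj₂) ⟨hv₁, hv₂⟩

theorem exists_bag_neighbors_subset (hD : IsTreeDecomposition H T B) (v : V) (z : ι) :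
    ∃ g, v ∈ B g ∧ ∀ a ∈ B z, H.Adj v a → a ∈ B g := by
  obtain ⟨g, hg, hgate⟩ := (hD.pathClosed_bags v).exists_gate (hD.exists_mem_bag v) z
  refine ⟨g, hg, fun a ha hva => ?_⟩
  obtain ⟨j, hvj, haj⟩ := hD.exists_bag_of_adj v a hva
  exact hD.inter_subset_of_mem_support z j _ (hD.isTree.path_isPath z j) g (hgate j hvj)
    ⟨ha, haj⟩

theorem isProperKStar_of_forall_adj [Finite V] (hD : IsTreeDecomposition H T B) {t : ℕ}
    (hcard : ∀ i, (B i).ncard ≤ t + 1) {z : ι}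
    (hz : ∀ u v, H.Adj u v → u ∈ B z ∨ v ∈ B z) : IsProperKStar H (t + 1) := by
  refine ⟨B z, hcard z, fun u hu v hv huv => (hz u v huv).elim hu hv, fun v hv => ?_⟩
  obtain ⟨g, hvg, hg⟩ := hD.exists_bag_neighbors_subset v z
  calc {a ∈ B z | H.Adj v a}.ncard
      ≤ (B g \ {v}).ncard :=
        Set.ncard_le_ncard (fun a ⟨ha, hva⟩ => ⟨hg a ha hva, hva.ne'⟩) (Set.toFinite _)
    _ = (B g).ncard - 1 := Set.ncard_sdiff_singleton_of_mem hvg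
    _ ≤ t + 1 - 1 := Nat.sub_le_sub_right (hcard g) 1

end IsTreeDecomposition

theorem hasGoodPartition_two_of_separator {V : Type*} {H : SimpleGraph V} {ℓ : ℕ}
    {u b w d : V} (hub : H.Adj u b) (hwd : H.Adj w d) {X : Set V} (hX : X.Finite)
    (hcard : X.ncard ≤ ℓ + 1) (hX₁ : u ∈ X ∨ b ∈ X)
    (hsep : ∀ v, (H.Adj v u ∨ H.Adj v b) → (H.Adj v w ∨ H.Adj v d) → v ∈ X) :
    HasGoodPartition H ℓ 2 := by
  let R : Set V := {v | v ≠ u ∧ v ≠ b ∧ v ≠ w ∧ v ≠ d}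
  let N₁ : Set V := {v | H.Adj v u ∨ H.Adj v b}
  let N₂ : Set V := {v | H.Adj v w ∨ H.Adj v d}
  obtain ⟨c, hcX, hc⟩ : ∃ c ∈ X, c = u ∨ c = b :=
    hX₁.elim (fun h => ⟨u, h, .inl rfl⟩) fun h => ⟨b, h, .inr rfl⟩
  refine ⟨![u, w], ![b, d], ![R ∩ N₁ ∩ N₂, R \ N₁, (R ∩ N₁) \ N₂], ?_, ?_, ?_, ?_, ?_⟩
  · intro i
    fin_cases i <;> assumption
  · intro i j hij
    fin_cases i <;> fin_cases j <;> simp_all [Set.disjoint_left, R, N₁, N₂]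
  · ext v
    simp only [Set.mem_iUnion, Fin.exists_fin_succ, Fin.forall_fin_two, Matrix.cons_val_zero,
      Matrix.cons_val_succ, Matrix.cons_val_one, Matrix.cons_val_fin_one, Set.mem_inter_iff,
      Set.mem_sdiff, Set.mem_ofPred_eq, exists_const, not_or, ne_eq, R, N₁, N₂]
    tauto
  · calc (R ∩ N₁ ∩ N₂).ncard
        ≤ (X \ {c}).ncard := Set.ncard_le_ncard (fun v ⟨⟨hR, h₁⟩, h₂⟩ =>
          ⟨hsep v h₁ h₂, by rcases hc with rfl | rfl; exacts [hR.1, hR.2.1]⟩) hX.sdiff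
      _ = X.ncard - 1 := Set.ncard_sdiff_singleton_of_mem hcX
      _ ≤ ℓ := by omega
  · intro i v hv
    fin_cases i <;> simp_all [R, N₁, N₂]

/-- Every finite graph of treewidth at most `t` is a proper `(t+1)`-star or
admits a good `(t, 2)`-partition. -/
theorem stmt_7 {V : Type*} [Fintype V] (H : SimpleGraph V) (t : ℕ)
    (htw : HasTreewidthLE H t) :
    IsProperKStar H (t + 1) ∨ HasGoodPartition H t 2 := by
  classical
  obtain ⟨ι, T, B, hT, hcover, hedge, hcoh, hcard⟩ := htw
  have hD : IsTreeDecomposition H T B := ⟨hT, hcover, hedge, hcoh⟩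
  let Q : {e : V × V // H.Adj e.1 e.2} → Set ι := fun e => {i | e.1.1 ∈ B i ∨ e.1.2 ∈ B i}
  have hQ : ∀ e, hT.PathClosed (Q e) := fun e => hD.pathClosed_bags_of_adj e.2
  have hQne : ∀ e, (Q e).Nonempty := fun e => (hcover e.1.1).imp fun _ => .inl
  by_cases hpair : ∀ e e', (Q e ∩ Q e').Nonempty
  · obtain ⟨z, hz⟩ := hT.helly Finset.univ Q (fun e _ => hQ e) fun e _ e' _ => hpair e e'
    exact .inl (hD.isProperKStar_of_forall_adj hcard fun u v huv =>
      hz ⟨(u, v), huv⟩ (Finset.mem_univ _))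
  · push Not at hpair
    obtain ⟨⟨⟨u, b⟩, hub⟩, ⟨⟨w, d⟩, hwd⟩, hdisj⟩ := hpair
    obtain ⟨x, hxQ, hx⟩ := (hQ ⟨(u, b), hub⟩).exists_separator (hQ ⟨(w, d), hwd⟩)
      (hQne _) (hQne _) (Set.disjoint_iff_inter_eq_empty.2 hdisj)
    exact .inr (hasGoodPartition_two_of_separator hub hwd (Set.toFinite _) (hcard x) hxQ
      fun v h₁ h₂ => hD.mem_bag_of_separates hx h₁ h₂)
end

section
/- Let c ≥ 1 and let G be a finite simple graph on n vertices whose complement is c-closed. Then the number of subsets S ⊆ V(G) such that either the induced subgraph G[S] has at least two connected components each containing an edge, or some connected component of G[S] contains two vertices at distance at least 6 in G[S], is at most n^4 · 2^{2(c−1)}. -/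
/-! In the complement `G` of a `c`-closed graph, an edge `uv` leaves at most `c - 1` vertices
outside `N[u] ∪ N[v]`: these are exactly the common neighbours of `u` and `v` in `Gᶜ`.
If `S` is one of the counted sets, `G[S]` has two edges at distance more than `4` from each
other (two edges in different components, or the first and last edges of a shortest path of
length at least `6`). A vertex of `S` in the closed neighbourhoods of both edges would join
them by a walk of length at most `4`, so `S` lies inside a set of at most `2(c - 1)` vertices
determined by the two edges. Summing `2 ^ (2(c - 1))` over the at most `n ^ 4` ordered pairs of
oriented edges gives the bound. -/

open SimpleGraph Set

lemma CClosed.ncard_compl_commonNeighbors_le {V : Type*} {G : SimpleGraph V} {c : ℕ}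
    (hclosed : CClosed Gᶜ c) {u v : V} (huv : G.Adj u v) :
    (Gᶜ.commonNeighbors u v).ncard ≤ c - 1 :=
  hclosed u v huv.ne (by simp [huv])

namespace SimpleGraph

variable {V : Type*}

/-- `w ∉ Hᶜ.commonNeighbors a b` says that `w` lies in the closed neighbourhood of `a` or of `b`. -/
lemma exists_walk_length_le_two_of_notMem_compl_commonNeighbors {H : SimpleGraph V}
    {a b w : V} (hab : H.Adj a b) (hw : w ∉ Hᶜ.commonNeighbors a b) :
    ∃ p : H.Walk a w, p.length ≤ 2 := by
  simp only [mem_commonNeighbors, compl_adj, not_and_or, not_not, ne_eq] at hw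
  rcases hw with (rfl | haw) | (rfl | hbw)
  · exact ⟨.nil, by simp⟩
  · exact ⟨.cons haw .nil, by simp⟩
  · exact ⟨.cons hab .nil, by simp⟩
  · exact ⟨.cons hab (.cons hbw .nil), by simp⟩

lemma exists_walk_length_le_four {H : SimpleGraph V} {a b x y w : V} (hab : H.Adj a b)
    (hxy : H.Adj x y) (hw₁ : w ∉ Hᶜ.commonNeighbors a b) (hw₂ : w ∉ Hᶜ.commonNeighbors x y) :
    ∃ p : H.Walk a x, p.length ≤ 4 := by
  obtain ⟨p, hp⟩ := exists_walk_length_le_two_of_notMem_compl_commonNeighbors hab hw₁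
  obtain ⟨q, hq⟩ := exists_walk_length_le_two_of_notMem_compl_commonNeighbors hxy hw₂
  exact ⟨p.append q.reverse, by rw [Walk.length_append, Walk.length_reverse]; omega⟩

lemma mem_compl_induce_commonNeighbors_iff {G : SimpleGraph V} {S : Set V} {a b w : S} :
    w ∈ (G.induce S)ᶜ.commonNeighbors a b ↔ (w : V) ∈ Gᶜ.commonNeighbors a b := by
  simp [mem_commonNeighbors, Subtype.ext_iff]

lemma subset_union_compl_commonNeighbors {G : SimpleGraph V} {S : Set V} {a b x y : S}
    (hab : (G.induce S).Adj a b) (hxy : (G.induce S).Adj x y)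
    (hfar : ∀ p : (G.induce S).Walk a x, 4 < p.length) :
    S ⊆ Gᶜ.commonNeighbors a b ∪ Gᶜ.commonNeighbors x y := by
  intro w hw
  by_contra hcov
  simp only [mem_union, not_or, ← mem_compl_induce_commonNeighbors_iff (w := ⟨w, hw⟩)] at hcov
  obtain ⟨p, hp⟩ := exists_walk_length_le_four hab hxy hcov.1 hcov.2
  exact (hfar p).not_ge hp

lemma exists_darts_subset_union_compl_commonNeighbors {G : SimpleGraph V} {S : Set V}
    (hS : (∃ a b x y : S, (G.induce S).Adj a b ∧ (G.induce S).Adj x y ∧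
        ¬ (G.induce S).Reachable a x) ∨
      (∃ u v : S, (G.induce S).Reachable u v ∧ 6 ≤ (G.induce S).dist u v)) :
    ∃ d₁ d₂ : G.Dart, S ⊆ Gᶜ.commonNeighbors d₁.fst d₁.snd ∪ Gᶜ.commonNeighbors d₂.fst d₂.snd := by
  rcases hS with ⟨a, b, x, y, hab, hxy, hax⟩ | ⟨u, v, huv, hdist⟩
  · exact ⟨⟨(a, b), hab⟩, ⟨(x, y), hxy⟩,
      subset_union_compl_commonNeighbors hab hxy fun p ↦ (hax p.reachable).elim⟩
  · obtain ⟨p, hp⟩ := huv.exists_walk_length_eq_dist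
    have hnil : ¬ p.Nil := Walk.not_nil_iff_lt_length.mpr (by omega)
    have hfar (q : (G.induce S).Walk u v) : 4 < q.length := by
      have := dist_le q
      omega
    have hfirst := Walk.adj_snd hnil
    have hlast := (Walk.adj_penultimate hnil).symm
    exact ⟨⟨(u, p.snd), hfirst⟩, ⟨(v, p.penultimate), hlast⟩,
      subset_union_compl_commonNeighbors hfirst hlast hfar⟩

lemma card_dart_le_sq [Fintype V] [DecidableEq V] (G : SimpleGraph V) [DecidableRel G.Adj] :
    Fintype.card G.Dart ≤ Fintype.card V ^ 2 := by
  simpa [sq] using Fintype.card_le_of_injective (Dart.toProd : G.Dart → V × V) Dart.toProd_injective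

lemma ncard_powerset_union_compl_commonNeighbors_le [Finite V] {G : SimpleGraph V} {c : ℕ}
    (hclosed : CClosed Gᶜ c) (d₁ d₂ : G.Dart) :
    (𝒫 (Gᶜ.commonNeighbors d₁.fst d₁.snd ∪ Gᶜ.commonNeighbors d₂.fst d₂.snd)).ncard ≤
      2 ^ (2 * (c - 1)) := by
  rw [ncard_powerset]
  refine Nat.pow_le_pow_right two_pos ((ncard_union_le _ _).trans ?_)
  have h₁ := hclosed.ncard_compl_commonNeighbors_le d₁.adj
  have h₂ := hclosed.ncard_compl_commonNeighbors_le d₂.adj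
  omega

end SimpleGraph

theorem stmt_9_general {V : Type*} [Fintype V] (G : SimpleGraph V) (c n : ℕ)
    (hn : Fintype.card V = n)
    (hclosed : CClosed Gᶜ c) :
    {S : Set V |
      (∃ a b x y : S, (G.induce S).Adj a b ∧ (G.induce S).Adj x y ∧
        ¬ (G.induce S).Reachable a x) ∨
      (∃ u v : S, (G.induce S).Reachable u v ∧ 6 ≤ (G.induce S).dist u v)}.ncard
      ≤ n ^ 4 * 2 ^ (2 * (c - 1)) := by
  classical
  set T : G.Dart × G.Dart → Set V := fun d ↦
    Gᶜ.commonNeighbors d.1.fst d.1.snd ∪ Gᶜ.commonNeighbors d.2.fst d.2.snd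
  calc _ ≤ (⋃ d, 𝒫 T d).ncard := ncard_le_ncard fun S hS ↦ by
        obtain ⟨d₁, d₂, hsub⟩ := exists_darts_subset_union_compl_commonNeighbors hS
        exact mem_iUnion.mpr ⟨(d₁, d₂), hsub⟩
    _ ≤ ∑ d, (𝒫 T d).ncard := ncard_iUnion_le_of_fintype _
    _ ≤ ∑ _d : G.Dart × G.Dart, 2 ^ (2 * (c - 1)) :=
        Finset.sum_le_sum fun d _ ↦ ncard_powerset_union_compl_commonNeighbors_le hclosed d.1 d.2
    _ = Fintype.card G.Dart ^ 2 * 2 ^ (2 * (c - 1)) := by simp [sq]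
    _ ≤ (n ^ 2) ^ 2 * 2 ^ (2 * (c - 1)) := by grw [G.card_dart_le_sq, hn]
    _ = n ^ 4 * 2 ^ (2 * (c - 1)) := by ring

/-- In the complement `G` of a `c`-closed graph on `n` vertices, the number of
sets `S` such that `G[S]` has at least two connected components each containing
an edge, or some connected component of `G[S]` contains two vertices at
distance at least `6`, is at most `n^4 · 2^(2(c-1))`. -/
theorem stmt_9 {V : Type*} [Fintype V] (G : SimpleGraph V) (c n : ℕ)
    (hc : 1 ≤ c) (hn : Fintype.card V = n)
    (hclosed : CClosed Gᶜ c) :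
    {S : Set V |
      (∃ a b x y : S, (G.induce S).Adj a b ∧ (G.induce S).Adj x y ∧
        ¬ (G.induce S).Reachable a x) ∨
      (∃ u v : S, (G.induce S).Reachable u v ∧ 6 ≤ (G.induce S).dist u v)}.ncard
      ≤ n ^ 4 * 2 ^ (2 * (c - 1)) :=
  stmt_9_general G c n hn hclosed
end

section
/- Let c ≥ 1, d ≥ 1, k ≥ 1, ℓ ≥ 0, and let G be a finite simple graph on n vertices whose complement is c-closed. Suppose D ∈ ℕ is such that in every finite simple graph on at most ℓ + k(c+1) vertices, the number of vertex sets that are maximal subject to inducing a d-degenerate subgraph is at most D. Then the number of sets S ⊆ V(G) that are maximal subject to the induced subgraph G[S] being d-degenerate and such that G[S] admits a good (ℓ,k)-partition is at most n^{ℓ+2k} · D. -/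
/-- The induced subgraph `G[S]` is `d`-degenerate: every nonempty subset of `S`
contains a vertex with at most `d` neighbors inside that subset. -/
def DegenerateOn {V : Type*} (G : SimpleGraph V) (S : Set V) (d : ℕ) : Prop :=
  ∀ T ⊆ S, T.Nonempty → ∃ v ∈ T, ({u ∈ T | G.Adj v u}).ncard ≤ d

/-!
Every vertex of a set `S` with a good `(ℓ, k)`-partition lies in `A₀`, is an endpoint of some
`eᵢ`, or is a common non-neighbour of both endpoints of some `eᵢ`. Since `Gᶜ` is `c`-closed, an
edge of `G` has at most `c - 1` common non-neighbours, so `S` lies in a set `W` of at most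
`ℓ + k(c+1)` vertices determined by `ℓ` vertices and `k` edges, of which there are at most
`n^(ℓ+2k)` choices. A maximal `d`-degenerate set of `G` inside `W` is a maximal `d`-degenerate
set of `G[W]`, and there are at most `D` of those.
-/

open Set

lemma Set.Finite.exists_fin_subset_range {α : Type*} [Nonempty α] {s : Set α} (hs : s.Finite)
    {m : ℕ} (hm : s.ncard ≤ m) : ∃ g : Fin m → α, s ⊆ range g := by
  obtain ⟨j, f, rfl⟩ := hs.fin_embedding
  rw [ncard_range_of_injective f.injective, Nat.card_eq_fintype_card, Fintype.card_fin] at hm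
  refine ⟨Function.extend (Fin.castLE hm) f fun _ => Classical.arbitrary α, ?_⟩
  rintro _ ⟨i, rfl⟩
  exact ⟨Fin.castLE hm i, (Fin.castLE_injective hm).extend_apply _ _ _⟩

namespace SimpleGraph

variable {V W : Type*}

def IsMaximalDegenerate (G : SimpleGraph V) (S : Set V) (d : ℕ) : Prop :=
  DegenerateOn G S d ∧ ∀ T : Set V, S ⊂ T → ¬ DegenerateOn G T d

section Comap

variable {G : SimpleGraph V} {ψ : W → V} {d : ℕ}

lemma ncard_adj_image (hψ : ψ.Injective) (T : Set W) (v : W) :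
    {u ∈ ψ '' T | G.Adj (ψ v) u}.ncard = {u ∈ T | (G.comap ψ).Adj v u}.ncard := by
  rw [← ncard_image_of_injective _ hψ]
  congr 1
  ext x
  constructor
  · rintro ⟨⟨u, hu, rfl⟩, hadj⟩
    exact ⟨u, ⟨hu, hadj⟩, rfl⟩
  · rintro ⟨u, ⟨hu, hadj⟩, rfl⟩
    exact ⟨mem_image_of_mem ψ hu, hadj⟩

lemma degenerateOn_comap_iff (hψ : ψ.Injective) {T : Set W} :
    DegenerateOn (G.comap ψ) T d ↔ DegenerateOn G (ψ '' T) d := by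
  constructor
  · intro h T₂ hT₂ hne
    obtain ⟨T', hT', rfl⟩ := subset_image_iff.1 hT₂
    obtain ⟨v, hv, hdeg⟩ := h T' hT' (image_nonempty.1 hne)
    exact ⟨ψ v, mem_image_of_mem ψ hv, by rwa [ncard_adj_image hψ]⟩
  · intro h T' hT' hne
    obtain ⟨_, ⟨v, hv, rfl⟩, hdeg⟩ := h (ψ '' T') (image_mono hT') (hne.image ψ)
    exact ⟨v, hv, by rwa [← ncard_adj_image hψ]⟩

lemma IsMaximalDegenerate.preimage {S : Set V} (h : G.IsMaximalDegenerate S d)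
    (hψ : ψ.Injective) (hS : S ⊆ range ψ) : (G.comap ψ).IsMaximalDegenerate (ψ ⁻¹' S) d := by
  have himage : ψ '' (ψ ⁻¹' S) = S := image_preimage_eq_of_subset hS
  refine ⟨(degenerateOn_comap_iff hψ).2 (himage.symm ▸ h.1), fun T hT hdeg => ?_⟩
  exact h.2 (ψ '' T) (himage ▸ hψ.image_strictMono hT) ((degenerateOn_comap_iff hψ).1 hdeg)

end Comap

lemma ncard_isMaximalDegenerate_subset_le {G : SimpleGraph V} {d m D : ℕ}
    (hD : ∀ (j : ℕ) (H : SimpleGraph (Fin j)), j ≤ m →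
      {S : Set (Fin j) | H.IsMaximalDegenerate S d}.ncard ≤ D)
    {W : Set V} (hWfin : W.Finite) (hW : W.ncard ≤ m) :
    {S : Set V | G.IsMaximalDegenerate S d ∧ S ⊆ W}.ncard ≤ D := by
  obtain ⟨j, ψ, rfl⟩ := hWfin.fin_embedding
  rw [ncard_range_of_injective ψ.injective, Nat.card_eq_fintype_card, Fintype.card_fin] at hW
  calc {S : Set V | G.IsMaximalDegenerate S d ∧ S ⊆ range ψ}.ncard
      ≤ {S : Set (Fin j) | (G.comap ψ).IsMaximalDegenerate S d}.ncard :=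
        ncard_le_ncard_of_injOn (ψ ⁻¹' ·) (fun S hS => hS.1.preimage ψ.injective hS.2)
          (fun S hS S' hS' h => (preimage_eq_preimage' hS.2 hS'.2).1 h)
    _ ≤ D := hD j _ hW

def edgeHull (G : SimpleGraph V) (a b : V) : Set V :=
  insert a (insert b (Gᶜ.neighborSet a ∩ Gᶜ.neighborSet b))

def partitionHull (G : SimpleGraph V) {ℓ k : ℕ} (p : Fin ℓ → V) (e : Fin k → V × V) : Set V :=
  range p ∪ ⋃ i, G.edgeHull (e i).1 (e i).2

lemma ncard_edgeHull_le {G : SimpleGraph V} {c : ℕ} (hc : 1 ≤ c) (hclosed : CClosed Gᶜ c)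
    {a b : V} (hab : G.Adj a b) : (G.edgeHull a b).ncard ≤ c + 1 := by
  have hcommon := hclosed a b hab.ne (by simp [compl_adj, hab])
  have ha := ncard_insert_le a (insert b (Gᶜ.neighborSet a ∩ Gᶜ.neighborSet b))
  have hb := ncard_insert_le b (Gᶜ.neighborSet a ∩ Gᶜ.neighborSet b)
  unfold edgeHull
  omega

lemma ncard_partitionHull_le {G : SimpleGraph V} {c ℓ k : ℕ} (hc : 1 ≤ c)
    (hclosed : CClosed Gᶜ c)
    (p : Fin ℓ → V) {e : Fin k → V × V} (he : ∀ i, G.Adj (e i).1 (e i).2) :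
    (G.partitionHull p e).ncard ≤ ℓ + k * (c + 1) := by
  refine (ncard_union_le _ _).trans (add_le_add ?_ ?_)
  · simpa [← Nat.card_coe_set_eq] using Finite.card_range_le p
  · calc (⋃ i, G.edgeHull (e i).1 (e i).2).ncard
        ≤ ∑ i, (G.edgeHull (e i).1 (e i).2).ncard := ncard_iUnion_le_of_fintype _
      _ ≤ ∑ _i : Fin k, (c + 1) :=
        Finset.sum_le_sum fun i _ => ncard_edgeHull_le hc hclosed (he i)
      _ = k * (c + 1) := by simp

end SimpleGraph

open SimpleGraph

lemma HasGoodPartition.exists_subset_partitionHull {V : Type*} [Finite V] [Nonempty V]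
    {G : SimpleGraph V} {S : Set V} {ℓ k : ℕ} (h : HasGoodPartition (G.induce S) ℓ k) :
    ∃ (p : Fin ℓ → V) (e : Fin k → V × V),
      (∀ i, G.Adj (e i).1 (e i).2) ∧ S ⊆ G.partitionHull p e := by
  obtain ⟨a, b, A, hadj, -, hcover, hA₀, hA⟩ := h
  obtain ⟨p, hp⟩ := (toFinite (Subtype.val '' A 0)).exists_fin_subset_range
    ((ncard_image_of_injective _ Subtype.val_injective).trans_le hA₀)
  refine ⟨p, fun i => (a i, b i), hadj, fun v hv => ?_⟩
  by_cases hend : ∃ i, (⟨v, hv⟩ : S) = a i ∨ (⟨v, hv⟩ : S) = b i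
  · obtain ⟨i, hi | hi⟩ := hend
    · exact Or.inr (mem_iUnion.2 ⟨i, Or.inl (congrArg Subtype.val hi)⟩)
    · exact Or.inr (mem_iUnion.2 ⟨i, Or.inr (Or.inl (congrArg Subtype.val hi))⟩)
  push Not at hend
  have hmem : (⟨v, hv⟩ : S) ∈ ⋃ i, A i := by rw [hcover]; exact hend
  obtain ⟨j, hj⟩ := mem_iUnion.1 hmem
  rcases Fin.eq_zero_or_eq_succ j with rfl | ⟨i, rfl⟩
  · exact Or.inl (hp ⟨_, hj, rfl⟩)
  · obtain ⟨hna, hnb⟩ := hA i _ hj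
    refine Or.inr (mem_iUnion.2 ⟨i, Or.inr (Or.inr ⟨?_, ?_⟩)⟩)
    · exact (compl_adj _ _ _).2 ⟨fun h => (hend i).1 (Subtype.ext h.symm), fun h => hna h.symm⟩
    · exact (compl_adj _ _ _).2 ⟨fun h => (hend i).2 (Subtype.ext h.symm), fun h => hnb h.symm⟩

theorem stmt_10_general {V : Type*} [Fintype V] (G : SimpleGraph V) (c d k ℓ n D : ℕ)
    (hc : 1 ≤ c) (hk : 1 ≤ k)
    (hn : Fintype.card V = n)
    (hclosed : CClosed Gᶜ c)
    (hD : ∀ (j : ℕ) (H : SimpleGraph (Fin j)), j ≤ ℓ + k * (c + 1) →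
      {S : Set (Fin j) | DegenerateOn H S d ∧
        ∀ T : Set (Fin j), S ⊂ T → ¬ DegenerateOn H T d}.ncard ≤ D) :
    {S : Set V | (DegenerateOn G S d ∧
        ∀ T : Set V, S ⊂ T → ¬ DegenerateOn G T d) ∧
      HasGoodPartition (G.induce S) ℓ k}.ncard
      ≤ n ^ (ℓ + 2 * k) * D := by
  let fiber (w : (Fin ℓ → V) × (Fin k → V × V)) : Set (Set V) :=
    {S | G.IsMaximalDegenerate S d ∧ (∀ i, G.Adj (w.2 i).1 (w.2 i).2) ∧
      S ⊆ G.partitionHull w.1 w.2}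
  have hcover : {S : Set V | G.IsMaximalDegenerate S d ∧ HasGoodPartition (G.induce S) ℓ k}
      ⊆ ⋃ w, fiber w := by
    rintro S ⟨hmax, hgood⟩
    have : Nonempty V := by obtain ⟨a, -⟩ := hgood; exact ⟨(a ⟨0, hk⟩).1⟩
    obtain ⟨p, e, he, hS⟩ := hgood.exists_subset_partitionHull
    exact mem_iUnion.2 ⟨(p, e), hmax, he, hS⟩
  have hfiber (w) : (fiber w).ncard ≤ D := by
    by_cases he : ∀ i, G.Adj (w.2 i).1 (w.2 i).2
    · calc (fiber w).ncard
          ≤ {S | G.IsMaximalDegenerate S d ∧ S ⊆ G.partitionHull w.1 w.2}.ncard :=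
            ncard_le_ncard fun S hS => ⟨hS.1, hS.2.2⟩
        _ ≤ D := ncard_isMaximalDegenerate_subset_le hD (toFinite _)
            (ncard_partitionHull_le hc hclosed w.1 he)
    · simp [fiber, he]
  calc _ ≤ (⋃ w, fiber w).ncard := ncard_le_ncard hcover (toFinite _)
    _ ≤ ∑ w, (fiber w).ncard := ncard_iUnion_le_of_fintype _
    _ ≤ ∑ _w : (Fin ℓ → V) × (Fin k → V × V), D := Finset.sum_le_sum fun w _ => hfiber w
    _ = n ^ (ℓ + 2 * k) * D := by
      simp only [Finset.sum_const, Finset.card_univ, Fintype.card_prod, Fintype.card_fun,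
        Fintype.card_fin, hn, smul_eq_mul]
      ring

/-- If in every graph on at most `ℓ + k(c+1)` vertices there are at most `D`
vertex sets maximal subject to inducing a `d`-degenerate subgraph, then in the
complement `G` of a `c`-closed graph on `n` vertices the number of sets `S`
maximal subject to `G[S]` being `d`-degenerate and such that `G[S]` admits a
good `(ℓ, k)`-partition is at most `n^(ℓ+2k) · D`. -/
theorem stmt_10 {V : Type*} [Fintype V] (G : SimpleGraph V) (c d k ℓ n D : ℕ)
    (hc : 1 ≤ c) (hd : 1 ≤ d) (hk : 1 ≤ k)
    (hn : Fintype.card V = n)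
    (hclosed : CClosed Gᶜ c)
    (hD : ∀ (j : ℕ) (H : SimpleGraph (Fin j)), j ≤ ℓ + k * (c + 1) →
      {S : Set (Fin j) | DegenerateOn H S d ∧
        ∀ T : Set (Fin j), S ⊂ T → ¬ DegenerateOn H T d}.ncard ≤ D) :
    {S : Set V | (DegenerateOn G S d ∧
        ∀ T : Set V, S ⊂ T → ¬ DegenerateOn G T d) ∧
      HasGoodPartition (G.induce S) ℓ k}.ncard
      ≤ n ^ (ℓ + 2 * k) * D :=
  stmt_10_general G c d k ℓ n D hc hk hn hclosed hD
end

section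
/- Let d ≥ 1 and let H be a d-degenerate finite simple graph. Then H is a 4d-star (equivalently, H has a vertex cover of size at most 4d) or H admits a good (4d, 2d)-partition. -/
/-- `H` is a `k`-star: its vertex set splits into a head `A` with `|A| ≤ k`
and an independent set of tails; equivalently, `A` is a vertex cover of size at
most `k`. -/
def IsKStar {V : Type*} (H : SimpleGraph V) (k : ℕ) : Prop :=
  ∃ A : Set V, A.ncard ≤ k ∧ ∀ u ∉ A, ∀ v ∉ A, ¬ H.Adj u v

/-! Pick disjoint edges greedily. After at most `2d` steps either the endpoints chosen so far
cover every edge, a vertex cover of size at most `4d`, or we hold `2d` disjoint edges `aᵢbᵢ`.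
In the latter case every vertex off these edges is sent to some edge it sees no endpoint of,
or to `A₀` if there is none. A vertex of `A₀` has at least `2d` neighbours among the `4d`
endpoints `E`, whereas the `d`-degenerate graph induced on `A₀ ∪ E` has at most `d·|A₀ ∪ E|`
edges; so `2d·|A₀| ≤ d·(|A₀| + 4d)`, i.e. `|A₀| ≤ 4d`. -/

open Finset

namespace SimpleGraph

variable {V : Type*} (H : SimpleGraph V)

def IsDegenerate (d : ℕ) : Prop :=
  ∀ S : Set V, S.Nonempty → ∃ v ∈ S, ({u ∈ S | H.Adj v u}).ncard ≤ d

theorem exists_matching_or_isKStar (m : ℕ) :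
    (∃ a b : Fin m → V, (∀ i, H.Adj (a i) (b i)) ∧ Function.Injective (Sum.elim a b)) ∨
      IsKStar H (2 * m) := by
  induction m with
  | zero => exact .inl ⟨Fin.elim0, Fin.elim0, isEmptyElim, Function.injective_of_subsingleton _⟩
  | succ m ih =>
    obtain ⟨a, b, hab, hinj⟩ | ⟨A, hA, hcover⟩ := ih
    · set S := Set.range (Sum.elim a b)
      by_cases hcover : ∀ u ∉ S, ∀ v ∉ S, ¬ H.Adj u v
      · refine .inr ⟨S, ?_, hcover⟩
        rw [Set.ncard_range_of_injective hinj, Nat.card_sum, Nat.card_fin]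
        omega
      push Not at hcover
      obtain ⟨x, hx, y, hy, hxy⟩ := hcover
      simp only [S, Set.mem_range, not_exists, Sum.forall, Sum.elim_inl, Sum.elim_inr] at hx hy
      refine .inl ⟨Fin.cons x a, Fin.cons y b, Fin.cases hxy hab, ?_⟩
      refine Function.Injective.sumElim ?_ ?_ ?_
      · exact Fin.cons_injective_of_injective (by simpa [eq_comm] using hx.1)
          (hinj.comp Sum.inl_injective)
      · exact Fin.cons_injective_of_injective (by simpa [eq_comm] using hy.2)
          (hinj.comp Sum.inr_injective)
      · intro i j
        cases i using Fin.cases <;> cases j using Fin.cases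
        · simpa using hxy.ne
        · simpa [eq_comm] using hx.2 _
        · simpa using hy.1 _
        · simpa using hinj.ne (Sum.inl_ne_inr (a := _) (b := _))
    · exact .inr ⟨A, by omega, hcover⟩

theorem hasGoodPartition_of_ncard_le {ℓ k : ℕ} {a b : Fin k → V} (hab : ∀ i, H.Adj (a i) (b i))
    (hbad : {v | (∀ i, v ≠ a i ∧ v ≠ b i) ∧ ∀ i, H.Adj v (a i) ∨ H.Adj v (b i)}.ncard ≤ ℓ) :
    HasGoodPartition H ℓ k := by
  classical
  -- The parts are fibres of `part`, which makes disjointness and covering automatic.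
  let part : V → Fin (k + 1) := fun v =>
    if h : ∃ i, ¬ H.Adj v (a i) ∧ ¬ H.Adj v (b i) then h.choose.succ else 0
  have part_eq_zero : ∀ v, part v = 0 ↔ ∀ i, H.Adj v (a i) ∨ H.Adj v (b i) := fun v => by
    simp only [part]
    split_ifs with h
    · simpa [Fin.succ_ne_zero, or_iff_not_imp_left] using h
    · push Not at h
      simpa [or_iff_not_imp_left] using h
  refine ⟨a, b, fun j => {v | (∀ i, v ≠ a i ∧ v ≠ b i) ∧ part v = j}, hab, ?_, ?_, ?_, ?_⟩
  · exact fun i j hij => Set.disjoint_left.2 fun v hi hj => hij (hi.2.symm.trans hj.2)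
  · ext v
    simp
  · simpa only [part_eq_zero] using hbad
  · rintro i v ⟨-, hv⟩
    simp only [part] at hv
    split_ifs at hv with h
    · exact Fin.succ_injective _ hv ▸ h.choose_spec
    · exact absurd hv.symm (Fin.succ_ne_zero i)

variable {H} {d : ℕ} [DecidableRel H.Adj]

theorem IsDegenerate.exists_card_filter_adj_le (hH : H.IsDegenerate d) {S : Finset V}
    (hS : S.Nonempty) : ∃ v ∈ S, #{u ∈ S | H.Adj v u} ≤ d := by
  obtain ⟨v, hv, hvd⟩ := hH S (by exact_mod_cast hS)
  exact ⟨v, hv, by rwa [← Set.ncard_coe_finset, coe_filter]⟩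

variable [DecidableEq V]

theorem IsDegenerate.sum_card_filter_adj_le (hH : H.IsDegenerate d) (S : Finset V) :
    ∑ v ∈ S, #{u ∈ S | H.Adj v u} ≤ 2 * d * #S := by
  induction S using Finset.strongInduction with
  | H S ih =>
  obtain rfl | hS := S.eq_empty_or_nonempty
  · simp
  -- Deleting a vertex `v` of degree at most `d` in `S` lowers the degree sum by `2 · deg v`.
  obtain ⟨v, hvS, hv⟩ := hH.exists_card_filter_adj_le hS
  have hS' := ih (S.erase v) (erase_ssubset hvS)
  have hv' := notMem_erase v S
  rw [← insert_erase hvS] at hv ⊢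
  simp only [card_filter, sum_insert hv', sum_add_distrib, H.irrefl, if_false, zero_add,
    H.adj_comm _ v] at hv hS' ⊢
  rw [card_insert_of_notMem hv']
  linarith

theorem IsDegenerate.mul_card_le (hH : H.IsDegenerate d) {B E : Finset V} (hBE : Disjoint B E)
    {k : ℕ} (hB : ∀ v ∈ B, k ≤ #{u ∈ E | H.Adj v u}) : k * #B ≤ d * (#B + #E) := by
  have hcount : ∑ v ∈ B, #{u ∈ E | H.Adj v u} = ∑ w ∈ E, #{u ∈ B | H.Adj w u} := by
    simpa [bipartiteAbove, bipartiteBelow, H.adj_comm] using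
      sum_card_bipartiteAbove_eq_sum_card_bipartiteBelow (s := B) (t := E) H.Adj
  have hB' : k * #B ≤ ∑ v ∈ B, #{u ∈ E | H.Adj v u} := by
    simpa [mul_comm] using card_nsmul_le_sum B _ k hB
  have hBU : ∑ v ∈ B, #{u ∈ E | H.Adj v u} ≤ ∑ v ∈ B, #{u ∈ B ∪ E | H.Adj v u} :=
    sum_le_sum fun _ _ => card_le_card (filter_subset_filter _ subset_union_right)
  have hEU : ∑ w ∈ E, #{u ∈ B | H.Adj w u} ≤ ∑ w ∈ E, #{u ∈ B ∪ E | H.Adj w u} :=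
    sum_le_sum fun _ _ => card_le_card (filter_subset_filter _ subset_union_left)
  have hsum := hH.sum_card_filter_adj_le (B ∪ E)
  rw [sum_union hBE, card_union_of_disjoint hBE] at hsum
  linarith

theorem le_card_filter_adj_image_sumElim {m : ℕ} {a b : Fin m → V}
    (hinj : Function.Injective (Sum.elim a b)) {v : V}
    (hv : ∀ i, H.Adj v (a i) ∨ H.Adj v (b i)) :
    m ≤ #{u ∈ univ.image (Sum.elim a b) | H.Adj v u} := by
  let σ : Fin m → Fin m ⊕ Fin m := fun i => if H.Adj v (a i) then .inl i else .inr i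
  have hσ : Function.Injective σ := fun i j h => by
    simp only [σ] at h
    split_ifs at h <;> simpa using h
  have hadj : ∀ i, H.Adj v (Sum.elim a b (σ i)) := fun i => by
    simp only [σ]
    split_ifs with h
    · exact h
    · exact (hv i).resolve_left h
  have hmem : ∀ i, Sum.elim a b (σ i) ∈ univ.image (Sum.elim a b) := fun i =>
    mem_image_of_mem _ (mem_univ _)
  simpa using card_le_card_of_injOn (s := univ) (Sum.elim a b ∘ σ)
    (fun i _ => mem_coe.2 <| mem_filter.2 ⟨hmem i, hadj i⟩) (hinj.comp hσ).injOn

theorem IsDegenerate.card_le_of_forall_adj (hH : H.IsDegenerate d) (hd : 0 < d)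
    {a b : Fin (2 * d) → V} (hinj : Function.Injective (Sum.elim a b)) {B : Finset V}
    (hB : ∀ v ∈ B, (∀ i, v ≠ a i ∧ v ≠ b i) ∧ ∀ i, H.Adj v (a i) ∨ H.Adj v (b i)) :
    #B ≤ 4 * d := by
  set E := univ.image (Sum.elim a b)
  have hBE : Disjoint B E := Finset.disjoint_left.2 fun v hvB hvE => by
    obtain ⟨i | i, -, rfl⟩ := mem_image.1 hvE
    exacts [((hB _ hvB).1 i).1 rfl, ((hB _ hvB).1 i).2 rfl]
  have hE : #E ≤ 4 * d :=
    card_image_le.trans (by rw [card_univ, Fintype.card_sum, Fintype.card_fin]; omega)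
  have key := hH.mul_card_le hBE fun v hv => le_card_filter_adj_image_sumElim hinj (hB v hv).2
  nlinarith

end SimpleGraph

/-- Every `d`-degenerate finite graph is a `4d`-star or admits a good
`(4d, 2d)`-partition. -/
theorem stmt_11 {V : Type*} [Fintype V] (H : SimpleGraph V) (d : ℕ)
    (hd : 1 ≤ d)
    (hdeg : ∀ S : Set V, S.Nonempty → ∃ v ∈ S, ({u ∈ S | H.Adj v u}).ncard ≤ d) :
    IsKStar H (4 * d) ∨ HasGoodPartition H (4 * d) (2 * d) := by
  classical
  have hH : H.IsDegenerate d := hdeg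
  obtain ⟨a, b, hab, hinj⟩ | hstar := H.exists_matching_or_isKStar (2 * d)
  · refine .inr (H.hasGoodPartition_of_ncard_le hab ?_)
    rw [Set.ncard_eq_toFinset_card']
    exact hH.card_le_of_forall_adj hd hinj fun v hv => by simpa using hv
  · exact .inl (by rwa [← mul_assoc] at hstar)
end

section
/- Let G be a finite simple graph and let u, v be adjacent vertices of G with N(u)∖{v} = N(v)∖{u} (true twins). Let G' be the graph obtained from G by deleting the edge uv. Then M₁(G) ≤ M₁(G'). -/
/-- `S` is a generalized induced matching in `G`: the induced subgraph `G[S]`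
has maximum degree at most `1`. -/
def GIM {V : Type*} (G : SimpleGraph V) (S : Set V) : Prop :=
  ∀ v ∈ S, ({u ∈ S | G.Adj v u}).ncard ≤ 1

/-- The number of maximal generalized induced matchings of `G`. -/
noncomputable def M1 {V : Type*} (G : SimpleGraph V) : ℕ :=
  {S : Set V | GIM G S ∧ ∀ T : Set V, S ⊂ T → ¬ GIM G T}.ncard

/-!
Deleting the edge `uv` does not change which sets are generalized induced matchings, so in
fact `M₁(G) = M₁(G')`. The only set that could gain this status contains `u` and `v`, with `u`
having a further neighbour `x` in it. But `x` is then a common neighbour of the twins, so `x`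
already has the two neighbours `u, v` in `G'[S]`.
-/

open SimpleGraph

theorem M1_eq_of_gim_iff {V : Type*} {G H : SimpleGraph V} (h : ∀ S, GIM G S ↔ GIM H S) :
    M1 G = M1 H := by
  simp only [M1, h]

section

variable {V : Type*} [Finite V]

theorem gim_iff_adj_unique (G : SimpleGraph V) (S : Set V) :
    GIM G S ↔ ∀ w ∈ S, ∀ ⦃x y⦄, x ∈ S → y ∈ S → G.Adj w x → G.Adj w y → x = y := by
  refine forall₂_congr fun w _ => ?_
  rw [Set.ncard_le_one_iff]
  exact ⟨fun h x y hx hy hwx hwy => h ⟨hx, hwx⟩ ⟨hy, hwy⟩,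
    fun h _ _ hx hy => h hx.1 hy.1 hx.2 hy.2⟩

theorem GIM.anti {G H : SimpleGraph V} {S : Set V} (hHG : H ≤ G) (hS : GIM G S) :
    GIM H S := by
  rw [gim_iff_adj_unique] at hS ⊢
  exact fun w hw x y hx hy hwx hwy => hS w hw hx hy (hHG hwx) (hHG hwy)

variable {G : SimpleGraph V} {u v : V}

theorem eq_of_adj_of_gim_deleteEdges_twins (huv : G.Adj u v)
    (htwin : G.neighborSet u \ {v} = G.neighborSet v \ {u}) {S : Set V}
    (hS : GIM (G.deleteEdges {s(u, v)}) S) (hu : u ∈ S) (hv : v ∈ S) {x : V} (hx : x ∈ S)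
    (hux : G.Adj u x) : x = v := by
  rw [gim_iff_adj_unique] at hS
  by_contra hxv
  have hxu : x ≠ u := hux.ne'
  have hvx : x ∈ G.neighborSet v \ {u} :=
    htwin ▸ show x ∈ G.neighborSet u \ {v} from ⟨hux, hxv⟩
  have hxu' : (G.deleteEdges {s(u, v)}).Adj x u := by simp [hux.symm, hxu, hxv]
  have hxv' : (G.deleteEdges {s(u, v)}).Adj x v := by simp [hvx.1.symm, hxu, hxv]
  exact huv.ne (hS x hx hu hv hxu' hxv')

theorem gim_deleteEdges_iff_of_twins (huv : G.Adj u v)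
    (htwin : G.neighborSet u \ {v} = G.neighborSet v \ {u}) (S : Set V) :
    GIM (G.deleteEdges {s(u, v)}) S ↔ GIM G S := by
  refine ⟨fun hS => ?_, GIM.anti (G.deleteEdges_le _)⟩
  have twin_u := eq_of_adj_of_gim_deleteEdges_twins huv htwin hS
  have twin_v := eq_of_adj_of_gim_deleteEdges_twins huv.symm htwin.symm
    (by rwa [Sym2.eq_swap])
  rw [gim_iff_adj_unique] at hS ⊢
  intro w hw x y hx hy hwx hwy
  by_cases hend : u ∈ S ∧ v ∈ S ∧ (w = u ∨ w = v)
  · obtain ⟨hu, hv, rfl | rfl⟩ := hend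
    · exact (twin_u hu hv hx hwx).trans (twin_u hu hv hy hwy).symm
    · exact (twin_v hv hu hx hwx).trans (twin_v hv hu hy hwy).symm
  · have survives : ∀ z ∈ S, G.Adj w z → (G.deleteEdges {s(u, v)}).Adj w z := by
      intro z hz hwz
      refine (deleteEdges_adj ..).2 ⟨hwz, fun h => hend ?_⟩
      rcases Sym2.eq_iff.1 (Set.mem_singleton_iff.1 h) with ⟨rfl, rfl⟩ | ⟨rfl, rfl⟩
      exacts [⟨hw, hz, .inl rfl⟩, ⟨hz, hw, .inr rfl⟩]
    exact hS w hw hx hy (survives x hx hwx) (survives y hy hwy)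

theorem M1_deleteEdges_eq_of_twins (huv : G.Adj u v)
    (htwin : G.neighborSet u \ {v} = G.neighborSet v \ {u}) :
    M1 (G.deleteEdges {s(u, v)}) = M1 G :=
  M1_eq_of_gim_iff (gim_deleteEdges_iff_of_twins huv htwin)

end

/-- Deleting the edge between two adjacent true twins `u, v` (vertices with
`N(u)∖{v} = N(v)∖{u}`) does not decrease the number of maximal generalized
induced matchings. -/
theorem stmt_14 {V : Type*} [Fintype V] (G : SimpleGraph V) (u v : V)
    (huv : G.Adj u v)
    (htwin : G.neighborSet u \ {v} = G.neighborSet v \ {u}) :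
    M1 G ≤ M1 (G.deleteEdges {s(u, v)}) :=
  (M1_deleteEdges_eq_of_twins huv htwin).ge
end

section
/- Let c ≥ 1 and let G be a finite simple graph on n vertices whose complement is c-closed. Suppose M₀ ∈ ℕ is such that every finite simple graph on at most c−1 vertices has at most M₀ maximal independent sets. Then the number of maximal induced stars of G is at most n^3 · M₀. -/
/-- `S` is a maximal independent set of `G`: it is independent and no strict
superset of it is independent. -/
def IsMaxIndep {V : Type*} (G : SimpleGraph V) (S : Set V) : Prop :=
  (∀ u ∈ S, ∀ v ∈ S, ¬ G.Adj u v) ∧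
  ∀ T : Set V, S ⊂ T → ¬ (∀ u ∈ T, ∀ v ∈ T, ¬ G.Adj u v)

/-- `S` induces a star in `G`: there is a vertex `v ∈ S` such that `S ∖ {v}`
is an independent set of `G`. -/
def IsStar {V : Type*} (G : SimpleGraph V) (S : Set V) : Prop :=
  ∃ v ∈ S, ∀ a ∈ S \ {v}, ∀ b ∈ S \ {v}, ¬ G.Adj a b

/-!
Let `S` be a maximal induced star with centre `v` and leaves `I = S \ {v}`, and assume `S ≠ V`.
Pick `z ∉ S` with the fewest neighbours in `I`; by maximality `z` has a neighbour `u ∈ I`.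
The leaves `Q` not adjacent to `z` lie in the common non-neighbourhood of `u` and `z`, which
has fewer than `c` vertices because `u z` is an edge of `G` and `Gᶜ` is `c`-closed. The
minimality of `z` forces every vertex `y ∉ S` without a neighbour in `Q` to be adjacent to `u`.
Hence `Q` is a maximal independent set of that small window, and the remaining leaves are
exactly the vertices `y ≠ v` adjacent to `z`, with no neighbour in `Q`, that are `u` or not
adjacent to `u`. So `S` is determined by the triple `(v, z, u)`, which takes fewer than `n ^ 3`
values, and a maximal independent set of a graph on at most `c - 1` vertices. Adding `S = V`
still gives at most `n ^ 3 · M₀`, since `M₀ ≥ 1` (the graph on no vertices has one maximal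
independent set).
-/

open Set

section MaxIndep

variable {V W : Type*} {G : SimpleGraph V}

lemma isMaxIndep_iff {S : Set V} :
    IsMaxIndep G S ↔
      (∀ u ∈ S, ∀ v ∈ S, ¬ G.Adj u v) ∧ ∀ x ∉ S, ∃ a ∈ S, G.Adj x a := by
  refine and_congr_right fun hind => ⟨fun hmax x hx => ?_, fun hdom T hST hT => ?_⟩
  · by_contra! h
    refine hmax (insert x S) (ssubset_insert hx) ?_
    rintro a (rfl | ha) b (rfl | hb)
    · exact G.irrefl
    · exact h b hb
    · exact fun hab => h a ha hab.symm
    · exact hind a ha b hb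
  · obtain ⟨x, hxT, hxS⟩ := exists_of_ssubset hST
    obtain ⟨a, haS, hxa⟩ := hdom x hxS
    exact hT x hxT a (hST.subset haS) hxa

lemma isMaxIndep_empty [IsEmpty V] : IsMaxIndep G ∅ :=
  isMaxIndep_iff.mpr ⟨by simp, fun x => isEmptyElim x⟩

lemma IsMaxIndep.image_iso {H : SimpleGraph W} (e : G ≃g H) {S : Set V}
    (hS : IsMaxIndep G S) : IsMaxIndep H (e '' S) := by
  rw [isMaxIndep_iff] at hS ⊢
  refine ⟨?_, fun x hx => ?_⟩
  · rintro _ ⟨a, ha, rfl⟩ _ ⟨b, hb, rfl⟩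
    rw [e.map_adj_iff]
    exact hS.1 a ha b hb
  · obtain ⟨a, ha, hxa⟩ := hS.2 (e.symm x) fun h => hx ⟨_, h, e.apply_symm_apply x⟩
    have hxa' := e.map_adj_iff.mpr hxa
    rw [e.apply_symm_apply] at hxa'
    exact ⟨e a, mem_image_of_mem e ha, hxa'⟩

lemma ncard_maxIndep_le_of_iso [Finite W] {H : SimpleGraph W} (e : G ≃g H) :
    {S | IsMaxIndep G S}.ncard ≤ {S | IsMaxIndep H S}.ncard :=
  ncard_le_ncard_of_injOn (e '' ·) (fun _ hS => hS.image_iso e)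
    (image_injective.mpr e.injective).injOn (toFinite _)

lemma ncard_maxIndep_le [Finite V] {k M₀ : ℕ}
    (hM₀ : ∀ (j : ℕ) (H : SimpleGraph (Fin j)), j ≤ k →
      {S : Set (Fin j) | IsMaxIndep H S}.ncard ≤ M₀)
    (hV : Nat.card V ≤ k) : {S | IsMaxIndep G S}.ncard ≤ M₀ :=
  (ncard_maxIndep_le_of_iso (SimpleGraph.Iso.map (Finite.equivFin V) G)).trans (hM₀ _ _ hV)

end MaxIndep

section Star

variable {V : Type*} {G : SimpleGraph V} {S : Set V} {u v z : V}

def IsStarAt (G : SimpleGraph V) (S : Set V) (v : V) : Prop :=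
  v ∈ S ∧ ∀ a ∈ S \ {v}, ∀ b ∈ S \ {v}, ¬ G.Adj a b

def IsMaxStar (G : SimpleGraph V) (S : Set V) : Prop :=
  IsStar G S ∧ ∀ T : Set V, S ⊂ T → ¬ IsStar G T

def starWindow (G : SimpleGraph V) (v z u : V) : Set V :=
  (Gᶜ.neighborSet u ∩ Gᶜ.neighborSet z) \ {v}

def rebuildStar (G : SimpleGraph V) (v z u : V) (Q : Set V) : Set V :=
  insert v (Q ∪ {y | y ≠ v ∧ G.Adj y z ∧ (∀ q ∈ Q, ¬ G.Adj y q) ∧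
    (y = u ∨ ¬ G.Adj u y)})

lemma ncard_starWindow_le [Finite V] {c : ℕ} (hclosed : CClosed Gᶜ c) (hzu : G.Adj z u) :
    (starWindow G v z u).ncard ≤ c - 1 :=
  (ncard_sdiff_singleton_le _ _).trans <|
    hclosed u z hzu.ne' fun h => ((SimpleGraph.compl_adj G u z).mp h).2 hzu.symm

lemma IsMaxStar.exists_adj (hS : IsMaxStar G S) (hv : IsStarAt G S v) (hz : z ∉ S) :
    ∃ u ∈ S \ {v}, G.Adj z u := by
  by_contra! h
  refine hS.2 _ (ssubset_insert hz) ⟨v, mem_insert_of_mem _ hv.1, ?_⟩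
  rintro a ⟨rfl | ha, hav⟩ b ⟨rfl | hb, hbv⟩
  · exact G.irrefl
  · exact h b ⟨hb, hbv⟩
  · exact fun hab => h a ⟨ha, hav⟩ hab.symm
  · exact hv.2 a ⟨ha, hav⟩ b ⟨hb, hbv⟩

lemma adj_of_forall_adj_imp_of_ncard_le [Finite V] {I : Set V} {y : V} (hu : u ∈ I)
    (hzu : G.Adj z u) (hyz : ∀ q ∈ I, G.Adj y q → G.Adj z q)
    (hcard : (G.neighborSet z ∩ I).ncard ≤ (G.neighborSet y ∩ I).ncard) : G.Adj y u := by
  have hsub : G.neighborSet y ∩ I ⊆ G.neighborSet z ∩ I :=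
    fun q ⟨hyq, hq⟩ => ⟨hyz q hq hyq, hq⟩
  have hu' : u ∈ G.neighborSet y ∩ I := eq_of_subset_of_ncard_le hsub hcard ▸ ⟨hzu, hu⟩
  exact hu'.1

lemma sdiff_neighborSet_subset_starWindow (hv : IsStarAt G S v) (hz : z ∉ S)
    (hu : u ∈ S \ {v}) (hzu : G.Adj z u) :
    (S \ {v}) \ G.neighborSet z ⊆ starWindow G v z u := by
  rintro q ⟨hq, hzq⟩
  refine ⟨⟨(G.compl_adj u q).mpr ⟨?_, hv.2 u hu q hq⟩,
    (G.compl_adj z q).mpr ⟨?_, hzq⟩⟩, hq.2⟩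
  · rintro rfl
    exact hzq hzu
  · rintro rfl
    exact hz hq.1

lemma isMaxIndep_induce_starWindow [Finite V] (hv : IsStarAt G S v) (hz : z ∉ S)
    (hu : u ∈ S \ {v}) (hzu : G.Adj z u)
    (hmin : ∀ y ∉ S,
      (G.neighborSet z ∩ (S \ {v})).ncard ≤ (G.neighborSet y ∩ (S \ {v})).ncard) :
    IsMaxIndep (G.induce (starWindow G v z u))
      (Subtype.val ⁻¹' ((S \ {v}) \ G.neighborSet z)) := by
  refine isMaxIndep_iff.mpr ⟨fun a ha b hb => hv.2 a ha.1 b hb.1, fun x hx => ?_⟩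
  obtain ⟨⟨hux, hzx⟩, hxv⟩ := x.2
  have hxS : x.1 ∉ S := fun hxS => hx ⟨⟨hxS, hxv⟩, ((G.compl_adj z x).mp hzx).2⟩
  by_contra! h
  refine ((G.compl_adj u x).mp hux).2
    (adj_of_forall_adj_imp_of_ncard_le hu hzu ?_ (hmin x hxS)).symm
  intro q hq hxq
  by_contra hzq
  exact h ⟨q, sdiff_neighborSet_subset_starWindow hv hz hu hzu ⟨hq, hzq⟩⟩ ⟨hq, hzq⟩ hxq

lemma eq_rebuildStar [Finite V] (hv : IsStarAt G S v) (hu : u ∈ S \ {v}) (hzu : G.Adj z u)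
    (hmin : ∀ y ∉ S,
      (G.neighborSet z ∩ (S \ {v})).ncard ≤ (G.neighborSet y ∩ (S \ {v})).ncard) :
    S = rebuildStar G v z u ((S \ {v}) \ G.neighborSet z) := by
  ext y
  constructor
  · intro hy
    by_cases hyv : y = v
    · exact Or.inl hyv
    by_cases hzy : G.Adj z y
    · refine Or.inr (Or.inr ⟨hyv, hzy.symm, fun q hq => hv.2 y ⟨hy, hyv⟩ q hq.1, ?_⟩)
      by_cases hyu : y = u
      exacts [Or.inl hyu, Or.inr (hv.2 u hu y ⟨hy, hyv⟩)]
    · exact Or.inr (Or.inl ⟨⟨hy, hyv⟩, hzy⟩)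
  · rintro (rfl | ⟨⟨hy, -⟩, -⟩ | ⟨hyv, hyz, hyQ, hyu⟩)
    · exact hv.1
    · exact hy
    · by_contra hyS
      have hyu' : G.Adj y u := adj_of_forall_adj_imp_of_ncard_le hu hzu
        (fun q hq hyq => by_contra fun hzq => hyQ q ⟨hq, hzq⟩ hyq) (hmin y hyS)
      rcases hyu with rfl | hnu
      · exact hyS hu.1
      · exact hnu hyu'.symm

lemma IsMaxStar.exists_rebuildStar [Finite V] (hS : IsMaxStar G S) (hne : S ≠ univ) :
    ∃ v z u, v ≠ z ∧ G.Adj z u ∧ ∃ T, IsMaxIndep (G.induce (starWindow G v z u)) T ∧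
      S = rebuildStar G v z u (Subtype.val '' T) := by
  obtain ⟨v, hv⟩ := hS.1
  obtain ⟨z, hz, hmin⟩ := exists_min_image Sᶜ (fun y => (G.neighborSet y ∩ (S \ {v})).ncard)
    (toFinite _) (nonempty_compl.mpr hne)
  obtain ⟨u, hu, hzu⟩ := hS.exists_adj hv hz
  refine ⟨v, z, u, ne_of_mem_of_not_mem hv.1 hz, hzu, _,
    isMaxIndep_induce_starWindow hv hz hu hzu hmin, ?_⟩
  rw [Subtype.image_preimage_coe,
    inter_eq_right.mpr (sdiff_neighborSet_subset_starWindow hv hz hu hzu)]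
  exact eq_rebuildStar hv hu hzu hmin

lemma ncard_maxStar_le [Finite V] [Nonempty V] {c M₀ : ℕ} (hclosed : CClosed Gᶜ c)
    (hM₀ : ∀ (j : ℕ) (H : SimpleGraph (Fin j)), j ≤ c - 1 →
      {S : Set (Fin j) | IsMaxIndep H S}.ncard ≤ M₀) :
    {S | IsMaxStar G S}.ncard ≤ (Nat.card V ^ 3 - 1) * M₀ + 1 := by
  classical
  have := Fintype.ofFinite V
  obtain ⟨x⟩ := ‹Nonempty V›
  let triples : Finset (V × V × V) :=
    Finset.univ.filter fun p => p.1 ≠ p.2.1 ∧ G.Adj p.2.1 p.2.2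
  let stars (p : V × V × V) : Set (Set V) :=
    (fun T => rebuildStar G p.1 p.2.1 p.2.2 (Subtype.val '' T)) ''
      {T | IsMaxIndep (G.induce (starWindow G p.1 p.2.1 p.2.2)) T}
  have hcover : {S | IsMaxStar G S} ⊆ insert univ (⋃ p ∈ triples, stars p) := by
    intro S hS
    by_cases hne : S = univ
    · exact Or.inl hne
    obtain ⟨v, z, u, hvz, hzu, T, hT, rfl⟩ := IsMaxStar.exists_rebuildStar hS hne
    exact Or.inr (mem_biUnion (x := (v, z, u)) (by simp [triples, hvz, hzu]) ⟨T, hT, rfl⟩)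
  have hstars : ∀ p ∈ triples, (stars p).ncard ≤ M₀ := by
    intro p hp
    refine (ncard_image_le (toFinite _)).trans (ncard_maxIndep_le hM₀ ?_)
    rw [Nat.card_coe_set_eq]
    exact ncard_starWindow_le hclosed (Finset.mem_filter.mp hp).2.2
  have htriples : triples.card ≤ Nat.card V ^ 3 - 1 := by
    refine Nat.le_sub_one_of_lt ?_
    calc triples.card < (Finset.univ : Finset (V × V × V)).card :=
          Finset.card_lt_card
            (Finset.filter_ssubset.mpr ⟨(x, x, x), Finset.mem_univ _, by simp⟩)
      _ = Nat.card V ^ 3 := by simp [Nat.card_eq_fintype_card]; ring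
  calc {S | IsMaxStar G S}.ncard ≤ (⋃ p ∈ triples, stars p).ncard + 1 :=
        (ncard_le_ncard hcover (toFinite _)).trans (ncard_insert_le _ _)
    _ ≤ ∑ p ∈ triples, (stars p).ncard + 1 := by
        gcongr
        exact triples.set_ncard_biUnion_le stars
    _ ≤ triples.card * M₀ + 1 := by
        gcongr
        exact Finset.sum_le_card_nsmul _ _ _ hstars
    _ ≤ (Nat.card V ^ 3 - 1) * M₀ + 1 := by gcongr

end Star

theorem stmt_16_general {V : Type*} [Fintype V] (G : SimpleGraph V) (c n M₀ : ℕ)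
    (hn : Fintype.card V = n)
    (hclosed : CClosed Gᶜ c)
    (hM₀ : ∀ (j : ℕ) (H : SimpleGraph (Fin j)), j ≤ c - 1 →
      {S : Set (Fin j) | IsMaxIndep H S}.ncard ≤ M₀) :
    {S : Set V | IsStar G S ∧ ∀ T : Set V, S ⊂ T → ¬ IsStar G T}.ncard
      ≤ n ^ 3 * M₀ := by
  change {S | IsMaxStar G S}.ncard ≤ _
  rcases isEmpty_or_nonempty V with hV | hV
  · have hnone : {S : Set V | IsMaxStar G S} = ∅ :=
      eq_empty_of_forall_notMem fun S hS => isEmptyElim hS.1.choose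
    rw [hnone, ncard_empty]
    exact Nat.zero_le _
  have hM₀pos : 0 < M₀ :=
    ((ncard_pos (toFinite {S : Set (Fin 0) | IsMaxIndep ⊥ S})).mpr
      ⟨∅, isMaxIndep_empty⟩).trans_le (hM₀ 0 ⊥ (Nat.zero_le _))
  have hM₀le : M₀ ≤ n ^ 3 * M₀ :=
    Nat.le_mul_of_pos_left _ (pow_pos (hn ▸ Fintype.card_pos) _)
  calc {S | IsMaxStar G S}.ncard ≤ (n ^ 3 - 1) * M₀ + 1 := by
        simpa only [Nat.card_eq_fintype_card, hn] using ncard_maxStar_le hclosed hM₀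
    _ ≤ n ^ 3 * M₀ := by
        rw [Nat.sub_one_mul]
        omega

/-- If every graph on at most `c-1` vertices has at most `M₀` maximal
independent sets, then the complement `G` of a `c`-closed graph on `n`
vertices has at most `n^3 · M₀` maximal induced stars. -/
theorem stmt_16 {V : Type*} [Fintype V] (G : SimpleGraph V) (c n M₀ : ℕ)
    (hc : 1 ≤ c) (hn : Fintype.card V = n)
    (hclosed : CClosed Gᶜ c)
    (hM₀ : ∀ (j : ℕ) (H : SimpleGraph (Fin j)), j ≤ c - 1 →
      {S : Set (Fin j) | IsMaxIndep H S}.ncard ≤ M₀) :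
    {S : Set V | IsStar G S ∧ ∀ T : Set V, S ⊂ T → ¬ IsStar G T}.ncard
      ≤ n ^ 3 * M₀ :=
  stmt_16_general G c n M₀ hn hclosed hM₀
end
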